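/- If (Q_1, …, Q_n) is a mixed-strategy Nash equilibrium of the MRF-induced game and Q = ∏_j Q_j, then for every player i ∈ V and every distribution Q'_i on A_i: KL(Q ∥ P) ≤ KL(Q'_i Q×_{-i} ∥ P) + ln|A_i|. -/

import Mathlib

/-!
Write `KL(R ∥ P) = ∑ R log R - E_R Ψ + log Z`. For a product distribution the first term splits
over the players, so replacing `Qᵢ` by `Q'ᵢ` only trades `∑ Qᵢ log Qᵢ ≤ 0` for
`∑ Q'ᵢ log Q'ᵢ ≥ -log |Aᵢ|`. The energy term cannot increase: `Ψ - Mᵢ` does not depend on `xᵢ`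
(`Ψ` is an exact potential of the game), so `E_R Ψ - E_Q Ψ` is the `Q'ᵢ`-average of the gains of
unilateral deviations of player `i`, each of which is `≤ 0` at a Nash equilibrium.
-/

open Finset Function Real

section ProductDistributions

variable {V : Type*} [DecidableEq V] {A : V → Type*}

lemma update_piSplitAt_symm (i : V) (a b : A i) (y : ∀ j : {j // j ≠ i}, A j) :
    update ((Equiv.piSplitAt i A).symm (b, y)) i a = (Equiv.piSplitAt i A).symm (a, y) := by
  ext j
  by_cases h : j = i
  · subst h; simp
  · simp [h]

variable [Fintype V]

lemma mul_prod_erase_eq_prod_update (Q : ∀ v, A v → ℝ) (i : V) (q : A i → ℝ)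
    (x : ∀ v, A v) : q (x i) * ∏ j ∈ univ.erase i, Q j (x j) = ∏ j, update Q i q j (x j) := by
  rw [← mul_prod_erase univ (fun j => update Q i q j (x j)) (mem_univ i), update_self]
  exact congrArg _ (prod_congr rfl fun j hj => by rw [update_of_ne (ne_of_mem_erase hj)])

lemma sum_apply_update {B : V → Type*} (F : ∀ k, B k → ℝ) (Q : ∀ v, B v) (i : V) (q : B i) :
    ∑ k, F k (update Q i q k) = ∑ k, F k (Q k) - F i (Q i) + F i q := by
  rw [sum_congr rfl fun k _ => apply_update F Q i q k, sum_update_of_mem (mem_univ i),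
    ← add_sum_erase _ _ (mem_univ i), sdiff_singleton_eq_erase]
  ring

variable [∀ v, Fintype (A v)]

lemma sum_prod_mul_eq_sum_piSplitAt (R : ∀ v, A v → ℝ) (i : V) (f : (∀ v, A v) → ℝ) :
    ∑ x : ∀ v, A v, (∏ j, R j (x j)) * f x =
      ∑ b, R i b * ∑ y : ∀ j : {j // j ≠ i}, A j,
        (∏ j : {j // j ≠ i}, R j (y j)) * f ((Equiv.piSplitAt i A).symm (b, y)) := by
  rw [← (Equiv.piSplitAt i A).symm.sum_comp, Fintype.sum_prod_type]
  refine sum_congr rfl fun b _ => ?_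
  rw [mul_sum]
  refine sum_congr rfl fun y _ => ?_
  rw [Fintype.prod_eq_mul_prod_subtype_ne _ i, mul_assoc]
  congr 2
  · simp
  · exact prod_congr rfl fun j _ => by simp [j.2]

lemma sum_prod_eq_one {ι : Type*} [Fintype ι] [DecidableEq ι] {α : ι → Type*}
    [∀ i, Fintype (α i)] (R : ∀ i, α i → ℝ) (hR : ∀ i, ∑ a, R i a = 1) :
    ∑ x : ∀ i, α i, ∏ j, R j (x j) = 1 := by
  rw [← Fintype.prod_sum]
  exact prod_eq_one fun j _ => hR j

lemma sum_prod_mul_apply (R : ∀ v, A v → ℝ) (hR : ∀ v, ∑ a, R v a = 1) (k : V)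
    (g : A k → ℝ) :
    ∑ x : ∀ v, A v, (∏ j, R j (x j)) * g (x k) = ∑ a, R k a * g a := by
  rw [sum_prod_mul_eq_sum_piSplitAt R k]
  refine sum_congr rfl fun b _ => ?_
  simp only [Equiv.piSplitAt_symm_apply, dif_pos, ← sum_mul,
    sum_prod_eq_one (fun j : {j // j ≠ k} => R j) (fun j => hR j), one_mul]

lemma sum_prod_mul_log_prod (R : ∀ v, A v → ℝ) (hR : ∀ v, ∑ a, R v a = 1) :
    ∑ x : ∀ v, A v, (∏ j, R j (x j)) * log (∏ j, R j (x j)) =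
      ∑ k, ∑ a, R k a * log (R k a) := by
  have hlog : ∀ x : ∀ v, A v, (∏ j, R j (x j)) * log (∏ j, R j (x j)) =
      ∑ k, (∏ j, R j (x j)) * log (R k (x k)) := by
    intro x
    by_cases hx : ∀ j, R j (x j) ≠ 0
    · rw [log_prod fun j _ => hx j, mul_sum]
    · obtain ⟨j, hj⟩ := not_forall_not.mp hx
      simp [prod_eq_zero (f := fun j => R j (x j)) (mem_univ j) hj]
  simp only [hlog]
  rw [sum_comm]
  exact sum_congr rfl fun k _ => sum_prod_mul_apply R hR k fun a => log (R k a)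

lemma sum_prod_update_mul (Q : ∀ v, A v → ℝ) (i : V) (hQ : ∑ a, Q i a = 1) (q : A i → ℝ)
    (f : (∀ v, A v) → ℝ) :
    ∑ x : ∀ v, A v, (∏ j, update Q i q j (x j)) * f x =
      ∑ a, q a * ∑ x : ∀ v, A v, (∏ j, Q j (x j)) * f (update x i a) := by
  simp only [sum_prod_mul_eq_sum_piSplitAt _ i, update_piSplitAt_symm, update_self]
  refine sum_congr rfl fun a _ => ?_
  rw [← sum_mul, hQ, one_mul]
  congr 1
  refine sum_congr rfl fun y _ => ?_
  congr 1
  exact prod_congr rfl fun j _ => by rw [update_of_ne j.2]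

lemma sum_prod_update_mul_le (Q : ∀ v, A v → ℝ) (i : V) (hQ : ∑ a, Q i a = 1) (q : A i → ℝ)
    (hq0 : ∀ a, 0 ≤ q a) (hq1 : ∑ a, q a = 1) (Ψ g : (∀ v, A v) → ℝ)
    (hΨg : ∀ x a, Ψ (update x i a) - Ψ x = g (update x i a) - g x)
    (hg : ∀ a, ∑ x : ∀ v, A v, (∏ j, Q j (x j)) * g (update x i a) ≤
      ∑ x : ∀ v, A v, (∏ j, Q j (x j)) * g x) :
    ∑ x : ∀ v, A v, (∏ j, update Q i q j (x j)) * Ψ x ≤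
      ∑ x : ∀ v, A v, (∏ j, Q j (x j)) * Ψ x := by
  rw [sum_prod_update_mul Q i hQ]
  have hdev : ∀ a, ∑ x : ∀ v, A v, (∏ j, Q j (x j)) * Ψ (update x i a) ≤
      ∑ x : ∀ v, A v, (∏ j, Q j (x j)) * Ψ x := by
    intro a
    have hsplit : ∑ x : ∀ v, A v, (∏ j, Q j (x j)) * Ψ (update x i a) =
        ∑ x : ∀ v, A v, (∏ j, Q j (x j)) * Ψ x +
          (∑ x : ∀ v, A v, (∏ j, Q j (x j)) * g (update x i a) -
            ∑ x : ∀ v, A v, (∏ j, Q j (x j)) * g x) := by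
      rw [← sum_sub_distrib, ← sum_add_distrib]
      exact sum_congr rfl fun x _ => by linear_combination (∏ j, Q j (x j)) * hΨg x a
    linarith [hg a]
  calc ∑ a, q a * ∑ x : ∀ v, A v, (∏ j, Q j (x j)) * Ψ (update x i a)
      ≤ ∑ a, q a * ∑ x : ∀ v, A v, (∏ j, Q j (x j)) * Ψ x :=
        sum_le_sum fun a _ => mul_le_mul_of_nonneg_left (hdev a) (hq0 a)
    _ = ∑ x : ∀ v, A v, (∏ j, Q j (x j)) * Ψ x := by rw [← sum_mul, hq1, one_mul]

end ProductDistributions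

lemma sum_mul_log_div_eq {ι : Type*} [Fintype ι] (R P Ψ : ι → ℝ) {Z : ℝ} (hZ : 0 < Z)
    (hP : ∀ x, P x = exp (Ψ x) / Z) (hR : ∑ x, R x = 1) :
    ∑ x, R x * log (R x / P x) = ∑ x, R x * log (R x) - ∑ x, R x * Ψ x + log Z := by
  have hterm : ∀ x, R x * log (R x / P x) = R x * log (R x) - R x * Ψ x + R x * log Z := by
    intro x
    rcases eq_or_ne (R x) 0 with h | h
    · simp [h]
    · rw [hP, log_div h (by positivity), log_div (exp_ne_zero _) hZ.ne', log_exp]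
      ring
  rw [sum_congr rfl fun x _ => hterm x, sum_add_distrib, sum_sub_distrib, ← sum_mul, hR, one_mul]

lemma sum_mul_log_nonpos {ι : Type*} [Fintype ι] (p : ι → ℝ) (h0 : ∀ a, 0 ≤ p a)
    (h1 : ∑ a, p a = 1) : ∑ a, p a * log (p a) ≤ 0 :=
  sum_nonpos fun a _ => mul_log_nonpos (h0 a)
    (h1 ▸ single_le_sum (fun b _ => h0 b) (mem_univ a))

lemma neg_log_card_le_sum_mul_log {ι : Type*} [Fintype ι] (p : ι → ℝ) (h0 : ∀ a, 0 ≤ p a)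
    (h1 : ∑ a, p a = 1) : -log (Fintype.card ι) ≤ ∑ a, p a * log (p a) := by
  set n : ℝ := (Fintype.card ι : ℝ)
  have hn : 0 < n := by
    have : (univ : Finset ι).Nonempty := nonempty_of_sum_ne_zero (h1 ▸ one_ne_zero)
    exact Nat.cast_pos.mpr (Fintype.card_pos_iff.mpr this.to_type)
  have hterm : ∀ a, n * p a - 1 ≤ p a * (n * log n) + n * (p a * log (p a)) := by
    intro a
    have hmul := negMulLog_mul n (p a)
    simp only [negMulLog] at hmul
    linarith [self_sub_one_le_mul_log (mul_nonneg hn.le (h0 a))]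
  have hsum := sum_le_sum fun a (_ : a ∈ univ) => hterm a
  rw [sum_sub_distrib, sum_add_distrib, ← mul_sum, ← sum_mul, ← mul_sum, h1, sum_const,
    card_univ, nsmul_one] at hsum
  have : 0 ≤ n * (log n + ∑ a, p a * log (p a)) := by linarith
  linarith [(mul_nonneg_iff_of_pos_left hn).mp this]

lemma sum_clique_update_sub_eq_filter_mem {V : Type*} [DecidableEq V] {A : V → Type*}
    (𝒞 : Finset (Finset V)) (φ : (C : Finset V) → ((j : {v // v ∈ C}) → A j.val) → ℝ)
    (x : ∀ v, A v) (i : V) (a : A i) :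
    ∑ C ∈ 𝒞, φ C (fun j => update x i a j) - ∑ C ∈ 𝒞, φ C (fun j => x j) =
      ∑ C ∈ 𝒞.filter (fun C => i ∈ C), φ C (fun j => update x i a j) -
        ∑ C ∈ 𝒞.filter (fun C => i ∈ C), φ C (fun j => x j) := by
  have hrest : ∑ C ∈ 𝒞.filter (fun C => i ∉ C), φ C (fun j => update x i a j) =
      ∑ C ∈ 𝒞.filter (fun C => i ∉ C), φ C (fun j => x j) :=
    sum_congr rfl fun C hC => congrArg (φ C) <| funext fun j =>
      update_of_ne (ne_of_mem_of_not_mem j.2 (mem_filter.1 hC).2) a x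
  rw [← sum_filter_add_sum_filter_not 𝒞 (fun C => i ∈ C),
    ← sum_filter_add_sum_filter_not 𝒞 (fun C => i ∈ C) (fun C => φ C (fun j => x j)), hrest]
  ring

/-- If `(Q₁, …, Qₙ)` is a mixed-strategy Nash equilibrium of the
MRF-induced game and `Q = ∏ⱼ Qⱼ`, then for every player `i` and every distribution
`Q'i` on `A i`: `KL(Q ∥ P) ≤ KL(Q'i ⊗ Q×₋ᵢ ∥ P) + ln |A i|`. -/
theorem msne_kl_bound_log_card
    {V : Type*} [Fintype V] [DecidableEq V]
    {A : V → Type*} [∀ v, Fintype (A v)] [∀ v, Nonempty (A v)]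
    (𝒞 : Finset (Finset V))
    (φ : (C : Finset V) → ((j : {v // v ∈ C}) → A j.val) → ℝ)
    (Ψ : (∀ v, A v) → ℝ)
    (hΨ : ∀ x, Ψ x = ∑ C ∈ 𝒞, φ C (fun j => x j.val))
    (M : V → (∀ v, A v) → ℝ)
    (hM : ∀ i x, M i x = ∑ C ∈ 𝒞.filter (fun C => i ∈ C), φ C (fun j => x j.val))
    (Z : ℝ) (hZ : Z = ∑ x : ∀ v, A v, Real.exp (Ψ x))
    (P : (∀ v, A v) → ℝ) (hP : ∀ x, P x = Real.exp (Ψ x) / Z)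
    (Q : ∀ v, A v → ℝ)
    (hQ0 : ∀ v a, 0 ≤ Q v a) (hQ1 : ∀ v, ∑ a : A v, Q v a = 1)
    (hNE : ∀ (i : V) (x'i : A i),
      ∑ x : ∀ v, A v, (∏ j, Q j (x j)) * M i (Function.update x i x'i) ≤
        ∑ x : ∀ v, A v, (∏ j, Q j (x j)) * M i x) :
    ∀ (i : V) (Q'i : A i → ℝ), (∀ a, 0 ≤ Q'i a) → (∑ a : A i, Q'i a = 1) →
      (∑ x : ∀ v, A v, (∏ j, Q j (x j)) * Real.log ((∏ j, Q j (x j)) / P x)) ≤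
        (∑ x : ∀ v, A v,
            (Q'i (x i) * ∏ j ∈ Finset.univ.erase i, Q j (x j)) *
              Real.log ((Q'i (x i) * ∏ j ∈ Finset.univ.erase i, Q j (x j)) / P x)) +
          Real.log (Fintype.card (A i)) := by
  intro i q hq0 hq1
  have hZ_pos : 0 < Z := hZ ▸ sum_pos (fun x _ => exp_pos _) univ_nonempty
  have hR1 : ∀ v, ∑ a, update Q i q v a = 1 := fun v => by
    rcases eq_or_ne v i with rfl | hv
    · simpa using hq1
    · simpa [update_of_ne hv] using hQ1 v
  have henergy := sum_prod_update_mul_le Q i (hQ1 i) q hq0 hq1 Ψ (M i)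
    (fun x a => by simp only [hΨ, hM]; exact sum_clique_update_sub_eq_filter_mem 𝒞 φ x i a)
    (hNE i)
  simp only [mul_prod_erase_eq_prod_update Q i q]
  rw [sum_mul_log_div_eq _ P Ψ hZ_pos hP (sum_prod_eq_one Q hQ1),
    sum_mul_log_div_eq _ P Ψ hZ_pos hP (sum_prod_eq_one _ hR1), sum_prod_mul_log_prod Q hQ1,
    sum_prod_mul_log_prod _ hR1, sum_apply_update (fun k (p : A k → ℝ) => ∑ a, p a * log (p a))]
  linarith [sum_mul_log_nonpos (Q i) (hQ0 i) (hQ1 i), neg_log_card_le_sum_mul_log q hq0 hq1]
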